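/- arXiv:1208.6107 — 8 statements merged into one kernel-verified Lean document; each statement's English description precedes it below -/
import Mathlib

section
/- Let n, h ∈ ℝ³, let D ∈ M₃(ℝ) be symmetric and Ω ∈ M₃(ℝ) be antisymmetric, and set w = n × (h × n). Then ( −½ n⊗w + ½ w⊗n ) : (D + Ω) − ((Ωn) × n) · (h × n) = 0. -/
open Matrix

noncomputable section

/-- Cross product of vectors in `ℝ³`. -/
def cross3 (a b : Fin 3 → ℝ) : Fin 3 → ℝ :=
  ![a 1 * b 2 - a 2 * b 1, a 2 * b 0 - a 0 * b 2, a 0 * b 1 - a 1 * b 0]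

/-- Outer (tensor) product `(a ⊗ b)ᵢⱼ = aᵢ bⱼ`. -/
def outer3 (a b : Fin 3 → ℝ) : Matrix (Fin 3) (Fin 3) ℝ := Matrix.of fun i j => a i * b j

/-- Frobenius inner product `A : B = ∑ᵢⱼ Aᵢⱼ Bᵢⱼ`. -/
def frob3 (A B : Matrix (Fin 3) (Fin 3) ℝ) : ℝ := ∑ i, ∑ j, A i j * B i j

/-- Euclidean inner product on `ℝ³`. -/
def dot3 (a b : Fin 3 → ℝ) : ℝ := ∑ i, a i * b i

/-- Squared Euclidean norm on `ℝ³`. -/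
def normsq3 (a : Fin 3 → ℝ) : ℝ := ∑ i, a i ^ 2

/-- Lemma 3.1, first cancellation identity. -/
theorem cancellation_first (n h : Fin 3 → ℝ) (D Ω : Matrix (Fin 3) (Fin 3) ℝ)
    (hD : D.IsSymm) (hΩ : Ωᵀ = -Ω) :
    frob3 ((-(1 / 2 : ℝ)) • outer3 n (cross3 n (cross3 h n))
        + (1 / 2 : ℝ) • outer3 (cross3 n (cross3 h n)) n) (D + Ω)
      - dot3 (cross3 (Ω.mulVec n) n) (cross3 h n) = 0 := by
  have hDe : ∀ i j, D j i = D i j := fun i j => hD.apply i j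
  have hΩe : ∀ i j, Ω j i = -Ω i j := fun i j => by
    have := congrFun (congrFun hΩ i) j
    simpa [Matrix.transpose_apply] using this
  simp only [frob3, dot3, cross3, outer3, Matrix.mulVec, dotProduct,
    Fin.sum_univ_three, Matrix.add_apply, Matrix.smul_apply, Matrix.of_apply,
    Matrix.cons_val_zero, Matrix.cons_val_one, Matrix.head_cons,
    Matrix.cons_val_two, Matrix.tail_cons, smul_eq_mul]
  rw [hDe 0 1, hDe 0 2, hDe 1 2, hΩe 0 1, hΩe 0 2, hΩe 1 2]
  have h00 : Ω 0 0 = 0 := by have := hΩe 0 0; linarith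
  have h11 : Ω 1 1 = 0 := by have := hΩe 1 1; linarith
  have h22 : Ω 2 2 = 0 := by have := hΩe 2 2; linarith
  rw [h00, h11, h22]; ring
end
end

section
/- Let n, h ∈ ℝ³, let D ∈ M₃(ℝ) be symmetric and Ω ∈ M₃(ℝ) be antisymmetric, and set w = n × (h × n). Then − ( ½ n⊗w + ½ w⊗n ) : (D + Ω) + (h × n) · ((Dn) × n) = 0. -/
open Matrix

noncomputable section

/-- Lemma 3.1, second cancellation identity. -/
theorem cancellation_second (n h : Fin 3 → ℝ) (D Ω : Matrix (Fin 3) (Fin 3) ℝ)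
    (hD : D.IsSymm) (hΩ : Ωᵀ = -Ω) :
    -frob3 ((1 / 2 : ℝ) • outer3 n (cross3 n (cross3 h n))
        + (1 / 2 : ℝ) • outer3 (cross3 n (cross3 h n)) n) (D + Ω)
      + dot3 (cross3 h n) (cross3 (D.mulVec n) n) = 0 := by
  have hd : ∀ i j : Fin 3, D i j = D j i := fun i j => by
    rw [Matrix.IsSymm] at hD; exact (congrFun (congrFun hD j) i).symm ▸ rfl
  have ho : ∀ i j : Fin 3, Ω i j = -Ω j i := fun i j => by
    have := congrFun (congrFun hΩ i) j
    simp only [Matrix.transpose_apply, Matrix.neg_apply] at this; linarith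
  have hd01 := hd 0 1; have hd02 := hd 0 2; have hd12 := hd 1 2
  have ho00 := ho 0 0; have ho11 := ho 1 1; have ho22 := ho 2 2
  have ho01 := ho 0 1; have ho02 := ho 0 2; have ho12 := ho 1 2
  simp only [frob3, dot3, cross3, outer3, Matrix.mulVec, dotProduct,
    Fin.sum_univ_three, Matrix.add_apply, Matrix.smul_apply, Matrix.of_apply,
    Matrix.cons_val_zero, Matrix.cons_val_one, Matrix.head_cons,
    Matrix.cons_val_two, Matrix.tail_cons, smul_eq_mul]
  rw [hd01, hd02, hd12, ho01, ho02, ho12]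
  have h00 : Ω 0 0 = 0 := by linarith
  have h11 : Ω 1 1 = 0 := by linarith
  have h22 : Ω 2 2 = 0 := by linarith
  rw [h00, h11, h22]
  ring
end
end

section
/- Let β₁, β₂, β₃ ∈ ℝ satisfy β₂ ≥ 0, 2β₂ + β₃ ≥ 0, and (3/2)β₂ + β₃ + β₁ ≥ 0. Then for every symmetric trace-free matrix D ∈ M₃(ℝ) and every vector n ∈ ℝ³ (not necessarily of unit length), β₁ (n⊗n : D)² + β₂ |n|⁴ (D : D) + β₃ |n|² |Dn|² ≥ 0. -/
open Matrix

noncomputable section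

private lemma combine3 (β₁ β₂ β₃ s A F W : ℝ)
    (h2 : β₂ ≥ 0) (h3 : 2 * β₂ + β₃ ≥ 0) (h1 : (3 / 2) * β₂ + β₃ + β₁ ≥ 0)
    (hs : 0 ≤ s) (hCS : A ^ 2 ≤ s * W) (hF : 0 ≤ F)
    (hKey : 0 ≤ 12 * s ^ 4 * F - 24 * s ^ 3 * W + 6 * s ^ 2 * A ^ 2) :
    β₁ * A ^ 2 + β₂ * s ^ 2 * F + β₃ * s * W ≥ 0 := by
  rcases eq_or_lt_of_le hs with h | h
  · have hs0 : s = 0 := h.symm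
    subst hs0
    have hA : A = 0 := by nlinarith [sq_nonneg A]
    rw [hA]; ring_nf; nlinarith
  · have hQ : 0 ≤ s ^ 2 * F - 2 * s * W + A ^ 2 / 2 := by
      nlinarith [mul_pos h h, hKey]
    have X : 0 ≤ β₂ * (s ^ 2 * F - 2 * s * W + A ^ 2 / 2) := mul_nonneg h2 hQ
    have Y : 0 ≤ (2 * β₂ + β₃) * (s * W - A ^ 2) :=
      mul_nonneg h3 (by linarith)
    have Z : 0 ≤ ((3 / 2) * β₂ + β₃ + β₁) * A ^ 2 :=
      mul_nonneg h1 (sq_nonneg A)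
    nlinarith [X, Y, Z]

private lemma key3 (n0 n1 n2 a b c d e : ℝ) :
    0 ≤ 12*(n0^2+n1^2+n2^2)^4*(a^2+b^2+c^2+b^2+d^2+e^2+c^2+e^2+(-a-d)^2) - 24*(n0^2+n1^2+n2^2)^3*((a*n0+b*n1+c*n2)^2+(b*n0+d*n1+e*n2)^2+(c*n0+e*n1+(-a-d)*n2)^2) + 6*(n0^2+n1^2+n2^2)^2*(n0*(a*n0+b*n1+c*n2)+n1*(b*n0+d*n1+e*n2)+n2*(c*n0+e*n1+(-a-d)*n2))^2 := by
  have hid : 12*(n0^2+n1^2+n2^2)^4*(a^2+b^2+c^2+b^2+d^2+e^2+c^2+e^2+(-a-d)^2) - 24*(n0^2+n1^2+n2^2)^3*((a*n0+b*n1+c*n2)^2+(b*n0+d*n1+e*n2)^2+(c*n0+e*n1+(-a-d)*n2)^2) + 6*(n0^2+n1^2+n2^2)^2*(n0*(a*n0+b*n1+c*n2)+n1*(b*n0+d*n1+e*n2)+n2*(c*n0+e*n1+(-a-d)*n2))^2 = ((2*(n0^2+n1^2+n2^2)^2*a - 2*(n0^2+n1^2+n2^2)*(n0*(a*n0+b*n1+c*n2)+n0*(a*n0+b*n1+c*n2))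 + (n0*(a*n0+b*n1+c*n2)+n1*(b*n0+d*n1+e*n2)+n2*(c*n0+e*n1+(-a-d)*n2))*n0*n0)-(2*(n0^2+n1^2+n2^2)^2*d - 2*(n0^2+n1^2+n2^2)*(n1*(b*n0+d*n1+e*n2)+n1*(b*n0+d*n1+e*n2)) + (n0*(a*n0+b*n1+c*n2)+n1*(b*n0+d*n1+e*n2)+n2*(c*n0+e*n1+(-a-d)*n2))*n1*n1))^2 + ((2*(n0^2+n1^2+n2^2)^2*d - 2*(n0^2+n1^2+n2^2)*(n1*(b*n0+d*n1+e*n2)+n1*(b*n0+d*n1+e*n2)) + (n0*(a*n0+b*n1+c*n2)+n1*(b*n0+d*n1+e*n2)+n2*(c*n0+e*n1+(-a-d)*n2))*n1*n1)-(2*(n0^2+n1^2+n2^2)^2*(-a-d) - 2*(n0^2+n1^2+n2^2)*(n2*(c*n0+e*n1+(-a-d)*n2)+n2*(c*n0+e*n1+(-a-d)*n2)) + (n0*(a*n0+b*n1+c*n2)+n1*(b*n0+d*n1+e*n2)+n2*(c*n0+e*n1+(-a-d)*n2))*n2*n2))^2 + ((2*(n0^2+n1^2+n2^2)^2*a - 2*(n0^2+n1^2+n2^2)*(n0*(a*n0+b*n1+c*n2)+n0*(a*n0+b*n1+c*n2))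 + (n0*(a*n0+b*n1+c*n2)+n1*(b*n0+d*n1+e*n2)+n2*(c*n0+e*n1+(-a-d)*n2))*n0*n0)-(2*(n0^2+n1^2+n2^2)^2*(-a-d) - 2*(n0^2+n1^2+n2^2)*(n2*(c*n0+e*n1+(-a-d)*n2)+n2*(c*n0+e*n1+(-a-d)*n2)) + (n0*(a*n0+b*n1+c*n2)+n1*(b*n0+d*n1+e*n2)+n2*(c*n0+e*n1+(-a-d)*n2))*n2*n2))^2 + 6*((2*(n0^2+n1^2+n2^2)^2*b - 2*(n0^2+n1^2+n2^2)*(n0*(b*n0+d*n1+e*n2)+n1*(a*n0+b*n1+c*n2)) + (n0*(a*n0+b*n1+c*n2)+n1*(b*n0+d*n1+e*n2)+n2*(c*n0+e*n1+(-a-d)*n2))*n0*n1)^2+(2*(n0^2+n1^2+n2^2)^2*c - 2*(n0^2+n1^2+n2^2)*(n0*(c*n0+e*n1+(-a-d)*n2)+n2*(a*n0+b*n1+c*n2)) + (n0*(a*n0+b*n1+c*n2)+n1*(b*n0+d*n1+e*n2)+n2*(c*n0+e*n1+(-a-d)*n2))*n0*n2)^2+(2*(n0^2+n1^2+n2^2)^2*e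 - 2*(n0^2+n1^2+n2^2)*(n1*(c*n0+e*n1+(-a-d)*n2)+n2*(b*n0+d*n1+e*n2)) + (n0*(a*n0+b*n1+c*n2)+n1*(b*n0+d*n1+e*n2)+n2*(c*n0+e*n1+(-a-d)*n2))*n1*n2)^2) := by ring
  rw [hid]
  positivity

private lemma master3 (β₁ β₂ β₃ : ℝ)
    (h2 : β₂ ≥ 0) (h3 : 2 * β₂ + β₃ ≥ 0) (h1 : (3 / 2) * β₂ + β₃ + β₁ ≥ 0)
    (n0 n1 n2 a b c d e : ℝ) :
    β₁ * (n0*(a*n0+b*n1+c*n2)+n1*(b*n0+d*n1+e*n2)+n2*(c*n0+e*n1+(-a-d)*n2)) ^ 2 + β₂ * (n0^2+n1^2+n2^2) ^ 2 * (a^2+b^2+c^2+b^2+d^2+e^2+c^2+e^2+(-a-d)^2) + β₃ * (n0^2+n1^2+n2^2) * ((a*n0+b*n1+c*n2)^2+(b*n0+d*n1+e*n2)^2+(c*n0+e*n1+(-a-d)*n2)^2) ≥ 0 := by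
  have hcs : (n0*(a*n0+b*n1+c*n2)+n1*(b*n0+d*n1+e*n2)+n2*(c*n0+e*n1+(-a-d)*n2)) ^ 2 ≤ (n0^2+n1^2+n2^2) * ((a*n0+b*n1+c*n2)^2+(b*n0+d*n1+e*n2)^2+(c*n0+e*n1+(-a-d)*n2)^2) := by
    nlinarith [sq_nonneg (n0*(b*n0+d*n1+e*n2)-n1*(a*n0+b*n1+c*n2)), sq_nonneg (n0*(c*n0+e*n1+(-a-d)*n2)-n2*(a*n0+b*n1+c*n2)), sq_nonneg (n1*(c*n0+e*n1+(-a-d)*n2)-n2*(b*n0+d*n1+e*n2))]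
  have hkey := key3 n0 n1 n2 a b c d e
  have hF : (0:ℝ) ≤ (a^2+b^2+c^2+b^2+d^2+e^2+c^2+e^2+(-a-d)^2) := by positivity
  have hs : (0:ℝ) ≤ (n0^2+n1^2+n2^2) := by positivity
  exact combine3 β₁ β₂ β₃ (n0^2+n1^2+n2^2) (n0*(a*n0+b*n1+c*n2)+n1*(b*n0+d*n1+e*n2)+n2*(c*n0+e*n1+(-a-d)*n2)) (a^2+b^2+c^2+b^2+d^2+e^2+c^2+e^2+(-a-d)^2) ((a*n0+b*n1+c*n2)^2+(b*n0+d*n1+e*n2)^2+(c*n0+e*n1+(-a-d)*n2)^2) h2 h3 h1 hs hcs hF hkey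

set_option maxHeartbeats 1000000 in
/-- Dissipation relation (3.6): under the coefficient conditions, the modified
dissipation is nonnegative for every symmetric trace-free `D` and every vector `n`. -/
theorem modified_dissipation_nonneg (β₁ β₂ β₃ : ℝ)
    (h2 : β₂ ≥ 0) (h3 : 2 * β₂ + β₃ ≥ 0) (h1 : (3 / 2) * β₂ + β₃ + β₁ ≥ 0)
    (D : Matrix (Fin 3) (Fin 3) ℝ) (hD : D.IsSymm) (htr : Matrix.trace D = 0)
    (n : Fin 3 → ℝ) :
    β₁ * frob3 (outer3 n n) D ^ 2 + β₂ * (normsq3 n) ^ 2 * frob3 D D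
      + β₃ * normsq3 n * normsq3 (D.mulVec n) ≥ 0 := by
  have e10 : D 1 0 = D 0 1 := hD.apply 0 1
  have e20 : D 2 0 = D 0 2 := hD.apply 0 2
  have e21 : D 2 1 = D 1 2 := hD.apply 1 2
  simp only [Matrix.trace, Fin.sum_univ_three, Matrix.diag] at htr
  have e22 : D 2 2 = -D 0 0 - D 1 1 := by linarith
  simp only [frob3, outer3, normsq3, Matrix.mulVec, dotProduct, Fin.sum_univ_three,
    Matrix.of_apply, e10, e20, e21, e22]
  linarith [master3 β₁ β₂ β₃ h2 h3 h1 (n 0) (n 1) (n 2) (D 0 0) (D 0 1) (D 0 2) (D 1 1) (D 1 2)]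
end
end

section
/- Let γ₁, γ₂ ∈ ℝ with γ₁ ≠ 0, and set μ₁ = 1/γ₁ and μ₂ = −γ₂/γ₁. Let n, m, h, d ∈ ℝ³ with |n| = 1 and n·m = 0. Then n × (h − γ₁ m − γ₂ d) = 0 if and only if m = μ₁ (h − (n·h) n) + μ₂ (d − (n·d) n). -/
open Matrix

noncomputable section

/-- Equivalence between the third Ericksen–Leslie equation and the reformulated
director equation (3.1). -/
theorem director_equation_equivalence (γ₁ γ₂ μ₁ μ₂ : ℝ) (hγ₁ : γ₁ ≠ 0)
    (hμ₁ : μ₁ = 1 / γ₁) (hμ₂ : μ₂ = -γ₂ / γ₁)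
    (n m h d : Fin 3 → ℝ) (hn : normsq3 n = 1) (hnm : dot3 n m = 0) :
    cross3 n (h - γ₁ • m - γ₂ • d) = 0 ↔
      m = μ₁ • (h - dot3 n h • n) + μ₂ • (d - dot3 n d • n) := by
  subst hμ₁ hμ₂
  simp only [normsq3, dot3, Fin.sum_univ_three] at hn hnm
  constructor
  · intro hc
    have h0 := congrFun hc 0
    have h1 := congrFun hc 1
    have h2 := congrFun hc 2
    simp [cross3, Pi.sub_apply, Pi.smul_apply, smul_eq_mul] at h0 h1 h2
    funext i
    fin_cases i <;>
      simp [dot3, Fin.sum_univ_three, Pi.add_apply, Pi.sub_apply, Pi.smul_apply,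
        smul_eq_mul] 
    · linear_combination ((h 0 - γ₁*m 0 - γ₂*d 0)/γ₁) * hn + (n 1/γ₁) * h2 - (n 2/γ₁) * h1 + n 0 * hnm + (m 0*n 0^2 + n 0*n 1*m 1 + n 0*n 2*m 2 - m 0) * mul_inv_cancel₀ hγ₁
    · linear_combination ((h 1 - γ₁*m 1 - γ₂*d 1)/γ₁) * hn + (n 2/γ₁) * h0 - (n 0/γ₁) * h2 + n 1 * hnm + (m 1*n 1^2 + n 1*n 2*m 2 + n 1*n 0*m 0 - m 1) * mul_inv_cancel₀ hγ₁
    · linear_combination ((h 2 - γ₁*m 2 - γ₂*d 2)/γ₁) * hn + (n 0/γ₁) * h1 - (n 1/γ₁) * h0 + n 2 * hnm + (m 2*n 2^2 + n 2*n 0*m 0 + n 2*n 1*m 1 - m 2) * mul_inv_cancel₀ hγ₁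
  · intro hm
    subst hm
    funext i
    fin_cases i <;>
      simp [cross3, dot3, Fin.sum_univ_three, Pi.add_apply, Pi.sub_apply,
        Pi.smul_apply, smul_eq_mul] <;> field_simp <;> ring
end
end

section
/- Let α₁, …, α₆ ∈ ℝ satisfy Parodi's relation α₂ + α₃ = α₆ − α₅; set γ₁ = α₃ − α₂, γ₂ = α₆ − α₅, and assume γ₁ ≠ 0. Set μ₁ = 1/γ₁, μ₂ = −γ₂/γ₁, β₁ = α₁ + γ₂²/γ₁, β₂ = α₄, β₃ = α₅ + α₆ − γ₂²/γ₁. Let n, h ∈ ℝ³ with |n| = 1, let D ∈ M₃(ℝ) be symmetric, and set N = μ₁ (h − (n·h) n) + μ₂ (Dn − (n·(Dn)) n). Then α₁ (n⊗n : D) n⊗n + α₂ n⊗N + α₃ N⊗n + α₄ D + α₅ n⊗(Dn) + α₆ (Dn)⊗n = β₁ (n⊗n : D) n⊗n − ½(1+μ₂) n⊗(n×(h×n)) + ½(1−μ₂) (n×(h×n))⊗n + β₂ D + (β₃/2) ( n⊗(Dn) + (Dn)⊗n ). -/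
open Matrix

noncomputable section

lemma cross3_eq (n h : Fin 3 → ℝ) (hn : normsq3 n = 1) :
    cross3 n (cross3 h n) = h - dot3 n h • n := by
  simp only [normsq3, Fin.sum_univ_three] at hn
  funext i
  fin_cases i
  · simp only [cross3, dot3, Fin.sum_univ_three]
    show n 1 * (h 0 * n 1 - h 1 * n 0) - n 2 * (h 2 * n 0 - h 0 * n 2)
        = h 0 - (n 0 * h 0 + n 1 * h 1 + n 2 * h 2) * n 0
    linear_combination h 0 * hn
  · simp only [cross3, dot3, Fin.sum_univ_three]
    show n 2 * (h 1 * n 2 - h 2 * n 1) - n 0 * (h 0 * n 1 - h 1 * n 0)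
        = h 1 - (n 0 * h 0 + n 1 * h 1 + n 2 * h 2) * n 1
    linear_combination h 1 * hn
  · simp only [cross3, dot3, Fin.sum_univ_three]
    show n 0 * (h 2 * n 0 - h 0 * n 2) - n 1 * (h 1 * n 2 - h 2 * n 1)
        = h 2 - (n 0 * h 0 + n 1 * h 1 + n 2 * h 2) * n 2
    linear_combination h 2 * hn

/-- Reformulation (3.2) of the Leslie stress. -/
theorem leslie_stress_reformulation
    (α₁ α₂ α₃ α₄ α₅ α₆ : ℝ) (parodi : α₂ + α₃ = α₆ - α₅)
    (γ₁ γ₂ μ₁ μ₂ β₁ β₂ β₃ : ℝ)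
    (hγ₁ : γ₁ = α₃ - α₂) (hγ₂ : γ₂ = α₆ - α₅) (hγ₁0 : γ₁ ≠ 0)
    (hμ₁ : μ₁ = 1 / γ₁) (hμ₂ : μ₂ = -γ₂ / γ₁)
    (hβ₁ : β₁ = α₁ + γ₂ ^ 2 / γ₁) (hβ₂ : β₂ = α₄) (hβ₃ : β₃ = α₅ + α₆ - γ₂ ^ 2 / γ₁)
    (n h : Fin 3 → ℝ) (hn : normsq3 n = 1)
    (D : Matrix (Fin 3) (Fin 3) ℝ) (hD : D.IsSymm) (N : Fin 3 → ℝ)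
    (hN : N = μ₁ • (h - dot3 n h • n) + μ₂ • (D.mulVec n - dot3 n (D.mulVec n) • n)) :
    (α₁ * frob3 (outer3 n n) D) • outer3 n n + α₂ • outer3 n N + α₃ • outer3 N n
        + α₄ • D + α₅ • outer3 n (D.mulVec n) + α₆ • outer3 (D.mulVec n) n
      = (β₁ * frob3 (outer3 n n) D) • outer3 n n
        - ((1 + μ₂) / 2) • outer3 n (cross3 n (cross3 h n))
        + ((1 - μ₂) / 2) • outer3 (cross3 n (cross3 h n)) n
        + β₂ • D + (β₃ / 2) • (outer3 n (D.mulVec n) + outer3 (D.mulVec n) n) := by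
  have h6 : α₆ = α₂ + α₃ + α₅ := by linarith
  have hF : frob3 (outer3 n n) D = dot3 n (D.mulVec n) := by
    simp [frob3, outer3, dot3, Matrix.mulVec, dotProduct, Fin.sum_univ_three]
    ring
  subst h6 hγ₁ hγ₂ hμ₁ hμ₂ hβ₁ hβ₂ hβ₃ hN
  rw [cross3_eq n h hn, hF]
  ext i j
  simp only [Matrix.add_apply, Matrix.sub_apply, Matrix.smul_apply, outer3, Matrix.of_apply,
    Pi.add_apply, Pi.smul_apply, Pi.sub_apply, smul_eq_mul]
  field_simp
  ring
end
end

section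
/- Let α₁, …, α₆ ∈ ℝ satisfy Parodi's relation α₂ + α₃ = α₆ − α₅, and set γ₁ = α₃ − α₂, γ₂ = α₆ − α₅. Let n, N ∈ ℝ³ be arbitrary, let D ∈ M₃(ℝ) be symmetric and Ω ∈ M₃(ℝ) be antisymmetric. Then [ α₁ (n⊗n : D) n⊗n + α₂ n⊗N + α₃ N⊗n + α₄ D + α₅ n⊗(Dn) + α₆ (Dn)⊗n ] : (D + Ω) = α₁ (n⊗n : D)² + α₄ (D : D) + (α₅ + α₆) |Dn|² + γ₂ N·(Dn) + γ₁ N·(Ωn) + γ₂ (Dn)·(Ωn). -/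
open Matrix

noncomputable section

set_option maxHeartbeats 1600000 in
/-- The pointwise algebraic identity for `σᴸ : ∇v` from the proof of Proposition 2.1. -/
theorem leslie_stress_contraction
    (α₁ α₂ α₃ α₄ α₅ α₆ : ℝ) (parodi : α₂ + α₃ = α₆ - α₅)
    (γ₁ γ₂ : ℝ) (hγ₁ : γ₁ = α₃ - α₂) (hγ₂ : γ₂ = α₆ - α₅)
    (n N : Fin 3 → ℝ) (D Ω : Matrix (Fin 3) (Fin 3) ℝ)
    (hD : D.IsSymm) (hΩ : Ωᵀ = -Ω) :
    frob3 ((α₁ * frob3 (outer3 n n) D) • outer3 n n + α₂ • outer3 n N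
        + α₃ • outer3 N n + α₄ • D + α₅ • outer3 n (D.mulVec n)
        + α₆ • outer3 (D.mulVec n) n) (D + Ω)
      = α₁ * frob3 (outer3 n n) D ^ 2 + α₄ * frob3 D D
        + (α₅ + α₆) * normsq3 (D.mulVec n) + γ₂ * dot3 N (D.mulVec n)
        + γ₁ * dot3 N (Ω.mulVec n) + γ₂ * dot3 (D.mulVec n) (Ω.mulVec n) := by
  have hD01 : D 1 0 = D 0 1 := by have := congrFun (congrFun hD 0) 1; simpa [Matrix.transpose] using this
  have hD02 : D 2 0 = D 0 2 := by have := congrFun (congrFun hD 0) 2; simpa [Matrix.transpose] using this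
  have hD12 : D 2 1 = D 1 2 := by have := congrFun (congrFun hD 1) 2; simpa [Matrix.transpose] using this
  have hΩ00 : Ω 0 0 = -Ω 0 0 := by have := congrFun (congrFun hΩ 0) 0; simpa using this
  have hΩ11 : Ω 1 1 = -Ω 1 1 := by have := congrFun (congrFun hΩ 1) 1; simpa using this
  have hΩ22 : Ω 2 2 = -Ω 2 2 := by have := congrFun (congrFun hΩ 2) 2; simpa using this
  have h0 : Ω 0 0 = 0 := by linarith
  have h1 : Ω 1 1 = 0 := by linarith
  have h2 : Ω 2 2 = 0 := by linarith
  have hΩ10 : Ω 1 0 = -Ω 0 1 := by have := congrFun (congrFun hΩ 0) 1; simpa using this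
  have hΩ20 : Ω 2 0 = -Ω 0 2 := by have := congrFun (congrFun hΩ 0) 2; simpa using this
  have hΩ21 : Ω 2 1 = -Ω 1 2 := by have := congrFun (congrFun hΩ 1) 2; simpa using this
  subst hγ₁ hγ₂
  simp only [frob3, outer3, dot3, normsq3, Matrix.mulVec, dotProduct,
    Fin.sum_univ_three, Matrix.add_apply, Matrix.smul_apply, Matrix.of_apply, smul_eq_mul]
  rw [hD01, hD02, hD12, h0, h1, h2, hΩ10, hΩ20, hΩ21]
  ring_nf
  linear_combination (N 0 * (D 0 0 * n 0 + D 0 1 * n 1 + D 0 2 * n 2)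
    + N 1 * (D 0 1 * n 0 + D 1 1 * n 1 + D 1 2 * n 2)
    + N 2 * (D 0 2 * n 0 + D 1 2 * n 1 + D 2 2 * n 2)) * parodi
end
end

section
/- Let γ₁, γ₂ ∈ ℝ with γ₁ ≠ 0. Let n ∈ ℝ³ with |n| = 1, let N, h ∈ ℝ³ with n·N = 0, let D ∈ M₃(ℝ) be symmetric, and suppose n × (h − γ₁ N − γ₂ Dn) = 0. Then γ₂ N·(Dn) + h·N = (1/γ₁) ( |n×h|² − γ₂² |Dn|² + γ₂² (n·(Dn))² ). -/
open Matrix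

noncomputable section

/-- The cross-product identity from the proof of Proposition 2.1 producing the
dissipative term `(1/γ₁)|n×h|²`. -/
theorem cross_product_identity (γ₁ γ₂ : ℝ) (hγ₁ : γ₁ ≠ 0)
    (n N h : Fin 3 → ℝ) (hn : normsq3 n = 1) (hnN : dot3 n N = 0)
    (D : Matrix (Fin 3) (Fin 3) ℝ) (hD : D.IsSymm)
    (heq : cross3 n (h - γ₁ • N - γ₂ • D.mulVec n) = 0) :
    γ₂ * dot3 N (D.mulVec n) + dot3 h N
      = (1 / γ₁) * (normsq3 (cross3 n h) - γ₂ ^ 2 * normsq3 (D.mulVec n)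
          + γ₂ ^ 2 * dot3 n (D.mulVec n) ^ 2) := by
  set d := D.mulVec n with hd
  have e0 := congrFun heq 0
  have e1 := congrFun heq 1
  have e2 := congrFun heq 2
  simp only [cross3, Pi.sub_apply, Pi.smul_apply, smul_eq_mul, Matrix.cons_val_zero,
    Matrix.cons_val_one, Matrix.head_cons, Matrix.cons_val_two, Matrix.tail_cons,
    Pi.zero_apply] at e0 e1 e2
  simp only [normsq3, dot3, Fin.sum_univ_three] at hn hnN
  set c : ℝ := (n 0 * h 0 + n 1 * h 1 + n 2 * h 2)
    - γ₂ * (n 0 * d 0 + n 1 * d 1 + n 2 * d 2) with hc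
  have hv0 : h 0 = γ₁ * N 0 + γ₂ * d 0 + c * n 0 := by
    linear_combination -(h 0 - γ₁ * N 0 - γ₂ * d 0) * hn - n 1 * e2 + n 2 * e1 - γ₁ * n 0 * hnN
  have hv1 : h 1 = γ₁ * N 1 + γ₂ * d 1 + c * n 1 := by
    linear_combination -(h 1 - γ₁ * N 1 - γ₂ * d 1) * hn + n 0 * e2 - n 2 * e0 - γ₁ * n 1 * hnN
  have hv2 : h 2 = γ₁ * N 2 + γ₂ * d 2 + c * n 2 := by
    linear_combination -(h 2 - γ₁ * N 2 - γ₂ * d 2) * hn - n 0 * e1 + n 1 * e0 - γ₁ * n 2 * hnN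
  simp only [normsq3, dot3, cross3, Fin.sum_univ_three, Matrix.cons_val_zero,
    Matrix.cons_val_one, Matrix.head_cons, Matrix.cons_val_two, Matrix.tail_cons]
  rw [hv0, hv1, hv2]
  field_simp
  ring_nf
  linear_combination
    (-(((γ₁ * N 0 + γ₂ * d 0)^2 + (γ₁ * N 1 + γ₂ * d 1)^2 + (γ₁ * N 2 + γ₂ * d 2)^2)) * hn
      + (γ₁ * c + γ₁^2 * (n 0 * N 0 + n 1 * N 1 + n 2 * N 2)
          + 2 * γ₁ * γ₂ * (n 0 * d 0 + n 1 * d 1 + n 2 * d 2)) * hnN)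
end
end

section
/- Let β₁, β₂, β₃, μ₂ ∈ ℝ, let n, h ∈ ℝ³, let D ∈ M₃(ℝ) be symmetric and Ω ∈ M₃(ℝ) be antisymmetric, and set w = n×(h×n) and σ̃ = β₁ (n⊗n : D) n⊗n − ½(1+μ₂) n⊗w + ½(1−μ₂) w⊗n + β₂ D + (β₃/2) ( n⊗(Dn) + (Dn)⊗n ). Then σ̃ : (D + Ω) − ((Ωn)×n)·(h×n) + μ₂ (h×n)·((Dn)×n) = β₁ (n⊗n : D)² + β₂ (D : D) + β₃ |Dn|². -/
open Matrix

noncomputable section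

/-- The combined pointwise cancellation computation of Section 3: the reformulated
Leslie stress contracted with `∇v` produces exactly the dissipative terms. -/
theorem modified_stress_dissipation (β₁ β₂ β₃ μ₂ : ℝ) (n h : Fin 3 → ℝ)
    (D Ω : Matrix (Fin 3) (Fin 3) ℝ) (hD : D.IsSymm) (hΩ : Ωᵀ = -Ω) :
    frob3 ((β₁ * frob3 (outer3 n n) D) • outer3 n n
          - ((1 + μ₂) / 2) • outer3 n (cross3 n (cross3 h n))
          + ((1 - μ₂) / 2) • outer3 (cross3 n (cross3 h n)) n
          + β₂ • D + (β₃ / 2) • (outer3 n (D.mulVec n) + outer3 (D.mulVec n) n))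
        (D + Ω)
      - dot3 (cross3 (Ω.mulVec n) n) (cross3 h n)
      + μ₂ * dot3 (cross3 h n) (cross3 (D.mulVec n) n)
    = β₁ * frob3 (outer3 n n) D ^ 2 + β₂ * frob3 D D + β₃ * normsq3 (D.mulVec n) := by

  have hd (i j : Fin 3) : D j i = D i j := by
    have := congrFun (congrFun hD i) j; simpa [Matrix.transpose] using this
  have hw (i j : Fin 3) : Ω j i = -Ω i j := by
    have := congrFun (congrFun hΩ i) j; simpa [Matrix.transpose] using this
  simp only [frob3, dot3, normsq3, cross3, outer3, Matrix.mulVec, dotProduct,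
    Fin.sum_univ_three, Matrix.add_apply, Matrix.sub_apply, Matrix.smul_apply,
    Matrix.of_apply, smul_eq_mul, Matrix.cons_val_zero, Matrix.cons_val_one,
    Matrix.head_cons, Matrix.cons_val_two, Matrix.tail_cons]
  have h10 := hd 0 1; have h20 := hd 0 2; have h21 := hd 1 2
  have w00 := hw 0 0; have w11 := hw 1 1; have w22 := hw 2 2
  have w10 := hw 0 1; have w20 := hw 0 2; have w21 := hw 1 2
  rw [h10, h20, h21, w10, w20, w21]
  have : Ω 0 0 = 0 := by linarith
  rw [this]
  have : Ω 1 1 = 0 := by linarith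
  rw [this]
  have : Ω 2 2 = 0 := by linarith
  rw [this]
  ring
end
end
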